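/- Assume the u_j are pairwise distinct. Then for every integer k ≥ 1 and every probability measure ν on [0,1], sup_{x ∈ [0,1]} | ν({ y : y ≺ x }) − ν({ y : φ_k(y) < φ_k(x) }) | ≤ Δ_k + sup_J | Leb(J) − ν(J) |, where the last supremum is over all intervals J ⊆ [0,1]. -/

import Mathlib

open MeasureTheory

/-- `I(x,y) = (min(x,y), max(x,y)]`. -/
def gapInterval (x y : ℝ) : Set ℝ := Set.Ioc (min x y) (max x y)

/-- `i(x,y) = inf { j ≥ 1 : u_j ∈ I(x,y) } ∈ ℕ ∪ {∞}` (with `inf ∅ = ∞`). -/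
noncomputable def firstIdx (u : ℕ → ℝ) (x y : ℝ) : ℕ∞ :=
  sInf ((fun j : ℕ => (j : ℕ∞)) '' {j : ℕ | 1 ≤ j ∧ u j ∈ gapInterval x y})

/-- `x ≺ y` iff `i(x,y) < ∞` and `(y − x) · s_{i(x,y)} > 0`. -/
def Prec (u s : ℕ → ℝ) (x y : ℝ) : Prop :=
  ∃ j : ℕ, firstIdx u x y = (j : ℕ∞) ∧ (y - x) * s j > 0

/-- `φ_k(x) = Leb({ y ∈ [0,1] : y ≺ x and i(x,y) ≤ k })`. -/
noncomputable def phiK (u s : ℕ → ℝ) (k : ℕ) (x : ℝ) : ℝ :=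
  (volume {y : ℝ | y ∈ Set.Icc (0:ℝ) 1 ∧ Prec u s y x ∧ firstIdx u x y ≤ (k : ℕ∞)}).toReal

/-- The maximal gap `Δ_k` of the points `{u_1, …, u_k}` in `[0,1]`. -/
noncomputable def maxGap (u : ℕ → ℝ) (k : ℕ) : ℝ :=
  sSup {d : ℝ | ∃ a b : ℝ, 0 ≤ a ∧ a ≤ b ∧ b ≤ 1 ∧
    (∀ j, 1 ≤ j → j ≤ k → u j ∉ Set.Ioo a b) ∧ d = b - a}

/-!
Encode `x` by the word `sideWord u s k x`, whose `j`-th letter is `s j` if `1 ≤ j ≤ k` and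
`u j ≤ x`, and `0` otherwise. Since `u j ∈ I(x,y)` exactly when `u j` separates `x` from `y`,
"`y ≺ x` with `i(x,y) ≤ k`" is the lexicographic order of these words, so `φ_k x` is the Lebesgue
measure of the points of `[0,1]` with a smaller word. The fibres of the word in `[0,1]` are
intervals of positive length (for the fibre of `1` because all `u j < 1`), hence `φ_k` is strictly
increasing along this order and `{φ_k y < φ_k x} = {word y < word x}`. The set `{y ≺ x}` lies
between this set and its union with the fibre `C` of `x`, an interval containing no `u j` with
`j ≤ k` in its interior, so the error is at most `ν C ≤ Leb C + |Leb C - ν C|`, and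
`Leb C ≤ Δ_k`.
-/

open Set Filter Topology ENNReal

theorem mem_gapInterval_iff {x y t : ℝ} : t ∈ gapInterval x y ↔ ¬(t ≤ x ↔ t ≤ y) := by
  rcases le_total x y with h | h <;>
    simp only [gapInterval, min_eq_left, min_eq_right, max_eq_left, max_eq_right, h, mem_Ioc] <;>
    grind

theorem firstIdx_comm (u : ℕ → ℝ) (x y : ℝ) : firstIdx u x y = firstIdx u y x := by
  simp only [firstIdx, gapInterval, min_comm, max_comm]

theorem firstIdx_eq_coe_iff {u : ℕ → ℝ} {x y : ℝ} {j : ℕ} :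
    firstIdx u x y = j ↔ IsLeast {m | 1 ≤ m ∧ u m ∈ gapInterval x y} j := by
  have of_isLeast : ∀ {i}, IsLeast {m | 1 ≤ m ∧ u m ∈ gapInterval x y} i → firstIdx u x y = i :=
    fun hi => (Nat.mono_cast.map_isLeast hi).csInf_eq
  refine ⟨fun h => ?_, of_isLeast⟩
  obtain ⟨i, hi⟩ : {m | 1 ≤ m ∧ u m ∈ gapInterval x y}.Nonempty := by
    by_contra hemp
    simp [firstIdx, not_nonempty_iff_eq_empty.mp hemp] at h
  have hleast := isLeast_csInf ⟨i, hi⟩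
  rwa [← Nat.cast_inj.mp ((of_isLeast hleast).symm.trans h)]

noncomputable def sideWord (u s : ℕ → ℝ) (k : ℕ) (x : ℝ) : Lex (ℕ → ℝ) :=
  toLex fun j => if 1 ≤ j ∧ j ≤ k ∧ u j ≤ x then s j else 0

section SideWord

variable {u s : ℕ → ℝ} {k : ℕ} {x y : ℝ}

theorem sideWord_apply_eq_iff (hs : ∀ j, 1 ≤ j → s j ≠ 0) {j : ℕ} :
    sideWord u s k y j = sideWord u s k x j ↔ (1 ≤ j → j ≤ k → (u j ≤ y ↔ u j ≤ x)) := by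
  by_cases hj : 1 ≤ j
  · have := hs j hj
    simp only [sideWord, Pi.toLex_apply]
    split_ifs <;> grind
  · simp [sideWord, hj]

theorem sideWord_eq_iff (hs : ∀ j, 1 ≤ j → s j ≠ 0) :
    sideWord u s k y = sideWord u s k x ↔ ∀ j, 1 ≤ j → j ≤ k → (u j ≤ y ↔ u j ≤ x) := by
  rw [← forall_congr' fun j => sideWord_apply_eq_iff hs (j := j), sideWord, sideWord, toLex_inj,
    funext_iff]
  rfl

theorem sideWord_apply_lt_iff {j : ℕ} (hj : 1 ≤ j) (hjk : j ≤ k) (hsep : u j ∈ gapInterval y x) :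
    sideWord u s k y j < sideWord u s k x j ↔ 0 < (x - y) * s j := by
  rw [mem_gapInterval_iff] at hsep
  by_cases hy : u j ≤ y
  · have hx : ¬u j ≤ x := by tauto
    simp only [sideWord, Pi.toLex_apply, hj, hjk, hy, hx, and_self, and_false, if_true, if_false]
    constructor <;> intro <;> nlinarith
  · have hx : u j ≤ x := by tauto
    simp only [sideWord, Pi.toLex_apply, hj, hjk, hy, hx, and_self, and_false, if_true, if_false]
    constructor <;> intro <;> nlinarith

theorem sideWord_lt_iff (hs : ∀ j, 1 ≤ j → s j ≠ 0) :
    sideWord u s k y < sideWord u s k x ↔ Prec u s y x ∧ firstIdx u x y ≤ k := by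
  rw [firstIdx_comm]
  constructor
  · rintro ⟨j, hbelow, hj⟩
    obtain ⟨hj1, hjk, hsep⟩ : 1 ≤ j ∧ j ≤ k ∧ u j ∈ gapInterval y x := by
      have := hj.ne
      rw [Ne, sideWord_apply_eq_iff hs] at this
      rw [mem_gapInterval_iff]
      tauto
    have hfirst : firstIdx u y x = j := by
      refine firstIdx_eq_coe_iff.2 ⟨⟨hj1, hsep⟩, fun m ⟨hm1, hm⟩ => not_lt.1 fun hmj => ?_⟩
      exact mem_gapInterval_iff.1 hm ((sideWord_apply_eq_iff hs).1 (hbelow m hmj) hm1 (by omega))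
    exact ⟨⟨j, hfirst, (sideWord_apply_lt_iff hj1 hjk hsep).1 hj⟩, hfirst ▸ Nat.cast_le.2 hjk⟩
  · rintro ⟨⟨j, hfirst, hsign⟩, hk⟩
    obtain ⟨⟨hj1, hsep⟩, hmin⟩ := firstIdx_eq_coe_iff.1 hfirst
    rw [hfirst, Nat.cast_le] at hk
    refine ⟨j, fun m hmj => (sideWord_apply_eq_iff hs).2 fun hm1 _ => ?_,
      (sideWord_apply_lt_iff hj1 hk hsep).2 hsign⟩
    by_contra h
    exact (hmin ⟨hm1, mem_gapInterval_iff.2 h⟩).not_gt hmj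

theorem Prec.sideWord_le (hs : ∀ j, 1 ≤ j → s j ≠ 0) (h : Prec u s y x) :
    sideWord u s k y ≤ sideWord u s k x := by
  obtain ⟨j, hfirst, hsign⟩ := h
  rcases le_or_gt j k with hjk | hkj
  · refine ((sideWord_lt_iff hs).2 ⟨⟨j, hfirst, hsign⟩, ?_⟩).le
    rw [firstIdx_comm, hfirst]
    exact Nat.cast_le.2 hjk
  · refine ((sideWord_eq_iff hs).2 fun m hm1 hmk => ?_).le
    by_contra hsep
    have := (firstIdx_eq_coe_iff.1 hfirst).2 ⟨hm1, mem_gapInterval_iff.2 hsep⟩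
    omega

theorem ordConnected_setOf_sideWord_eq (hs : ∀ j, 1 ≤ j → s j ≠ 0) (x : ℝ) :
    {z | sideWord u s k z = sideWord u s k x}.OrdConnected := by
  refine ⟨fun a ha b hb c hc => ?_⟩
  simp only [mem_ofPred_eq, sideWord_eq_iff hs] at ha hb ⊢
  intro j hj hjk
  have := ha j hj hjk
  have := hb j hj hjk
  constructor <;> intro <;> grind [hc.1, hc.2]

end SideWord

theorem eventually_le_iff_nhdsGT (t x : ℝ) : ∀ᶠ z in 𝓝[>] x, (t ≤ z ↔ t ≤ x) := by
  rcases le_or_gt t x with h | h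
  · filter_upwards [self_mem_nhdsWithin] with z hz
    exact iff_of_true (h.trans (le_of_lt hz)) h
  · filter_upwards [nhdsWithin_le_nhds (Iio_mem_nhds h)] with z hz
    exact iff_of_false (not_le.2 hz) (not_le.2 h)

theorem eventually_le_iff_nhdsLT {t x : ℝ} (h : t < x) : ∀ᶠ z in 𝓝[<] x, (t ≤ z ↔ t ≤ x) := by
  filter_upwards [nhdsWithin_le_nhds (Ioi_mem_nhds h)] with z hz
  exact iff_of_true (le_of_lt hz) h.le

theorem volume_Icc_inter_setOf_sideWord_eq_pos {u s : ℕ → ℝ} {k : ℕ} (hs : ∀ j, 1 ≤ j → s j ≠ 0)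
    (hu : ∀ j, 1 ≤ j → u j < 1) {y : ℝ} (hy : y ∈ Icc 0 1) :
    0 < volume (Icc 0 1 ∩ {z | sideWord u s k z = sideWord u s k y}) := by
  obtain ⟨a, b, hab, hsub⟩ : ∃ a b, a < b ∧
      Ioo a b ⊆ Icc 0 1 ∩ {z | ∀ j ∈ Finset.Icc 1 k, (u j ≤ z ↔ u j ≤ y)} := by
    rcases hy.2.lt_or_eq with hy1 | rfl
    · obtain ⟨b, hb, hsub⟩ := mem_nhdsGT_iff_exists_Ioo_subset.1 <| inter_mem
        (Icc_mem_nhdsGT_of_mem ⟨hy.1, hy1⟩)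
        ((Filter.eventually_all_finset _).2 fun j _ => eventually_le_iff_nhdsGT (u j) y)
      exact ⟨y, b, hb, hsub⟩
    · obtain ⟨a, ha, hsub⟩ := mem_nhdsLT_iff_exists_Ioo_subset.1 <| inter_mem
        (Icc_mem_nhdsLT zero_lt_one)
        ((Filter.eventually_all_finset _).2 fun j hj =>
          eventually_le_iff_nhdsLT (hu j (Finset.mem_Icc.1 hj).1))
      exact ⟨a, 1, ha, hsub⟩
  refine ((Measure.measure_Ioo_pos volume).2 hab).trans_le (measure_mono (hsub.trans ?_))
  exact inter_subset_inter_right _ fun z hz =>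
    (sideWord_eq_iff hs).2 fun j hj hjk => hz j (Finset.mem_Icc.2 ⟨hj, hjk⟩)

section Measure

variable {X : Type*} [MeasurableSpace X] {μ : Measure X}

theorem measureReal_inter_preimage_Iio_lt_iff {α : Type*} [LinearOrder α] {S : Set X}
    {w : X → α} {x y : X} (hS : μ S ≠ ∞) (hmeas : MeasurableSet (S ∩ w ⁻¹' {w y}))
    (hpos : 0 < μ (S ∩ w ⁻¹' {w y})) :
    μ.real (S ∩ w ⁻¹' Iio (w y)) < μ.real (S ∩ w ⁻¹' Iio (w x)) ↔ w y < w x := by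
  constructor
  · intro h
    by_contra hle
    exact h.not_ge (measureReal_mono (inter_subset_inter_right _ fun z hz =>
      lt_of_lt_of_le hz (not_lt.1 hle)) (measure_ne_top_of_subset inter_subset_left hS))
  · intro hlt
    have hdisj : Disjoint (S ∩ w ⁻¹' Iio (w y)) (S ∩ w ⁻¹' {w y}) :=
      Disjoint.inter_left' _ (Disjoint.inter_right' _ (disjoint_left.2 fun z hz hz' =>
        (ne_of_lt hz) hz'))
    have hsub : S ∩ w ⁻¹' Iio (w y) ∪ S ∩ w ⁻¹' {w y} ⊆ S ∩ w ⁻¹' Iio (w x) := by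
      rintro z (⟨hz, hzy⟩ | ⟨hz, hzy⟩)
      · exact ⟨hz, lt_trans hzy hlt⟩
      · exact ⟨hz, (mem_singleton_iff.1 hzy).trans_lt hlt⟩
    calc μ.real (S ∩ w ⁻¹' Iio (w y))
        < μ.real (S ∩ w ⁻¹' Iio (w y)) + μ.real (S ∩ w ⁻¹' {w y}) :=
          lt_add_of_pos_right _ (ENNReal.toReal_pos hpos.ne'
            (measure_ne_top_of_subset inter_subset_left hS))
      _ = μ.real (S ∩ w ⁻¹' Iio (w y) ∪ S ∩ w ⁻¹' {w y}) := (measureReal_union hdisj hmeas).symm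
      _ ≤ μ.real (S ∩ w ⁻¹' Iio (w x)) :=
          measureReal_mono hsub (measure_ne_top_of_subset inter_subset_left hS)

theorem abs_measureReal_sub_le_of_subset_union [IsFiniteMeasure μ] {A P C : Set X} (hAP : A ⊆ P)
    (hPAC : P ⊆ A ∪ C) : |μ.real P - μ.real A| ≤ μ.real C := by
  rw [abs_of_nonneg (sub_nonneg.2 (measureReal_mono hAP))]
  linarith [measureReal_mono hPAC (μ := μ), measureReal_union_le (μ := μ) A C]

end Measure

section Rank

variable {u s : ℕ → ℝ} {k : ℕ} {x y : ℝ}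

theorem phiK_eq_volume_real (hs : ∀ j, 1 ≤ j → s j ≠ 0) (x : ℝ) :
    phiK u s k x = volume.real (Icc 0 1 ∩ sideWord u s k ⁻¹' Iio (sideWord u s k x)) := by
  rw [phiK, Measure.real]
  congr 2
  ext y
  exact and_congr_right fun _ => (sideWord_lt_iff hs).symm

theorem phiK_lt_phiK_iff (hs : ∀ j, 1 ≤ j → s j ≠ 0) (hu : ∀ j, 1 ≤ j → u j < 1)
    (hy : y ∈ Icc 0 1) : phiK u s k y < phiK u s k x ↔ sideWord u s k y < sideWord u s k x := by
  rw [phiK_eq_volume_real hs, phiK_eq_volume_real hs]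
  exact measureReal_inter_preimage_Iio_lt_iff measure_Icc_lt_top.ne
    (measurableSet_Icc.inter (ordConnected_setOf_sideWord_eq hs y).measurableSet)
    (volume_Icc_inter_setOf_sideWord_eq_pos hs hu hy)

end Rank

theorem sub_le_maxGap {u : ℕ → ℝ} {k : ℕ} {a b : ℝ} (ha : 0 ≤ a) (hab : a ≤ b) (hb : b ≤ 1)
    (hgap : ∀ j, 1 ≤ j → j ≤ k → u j ∉ Ioo a b) : b - a ≤ maxGap u k :=
  le_csSup ⟨1, by rintro d ⟨a', b', ha', -, hb', -, rfl⟩; linarith⟩ ⟨a, b, ha, hab, hb, hgap, rfl⟩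

theorem volume_real_le_maxGap {u : ℕ → ℝ} {k : ℕ} {C : Set ℝ} (hC : C ⊆ Icc 0 1)
    (hne : C.Nonempty) (hgap : ∀ j, 1 ≤ j → j ≤ k → ∀ a ∈ C, ∀ b ∈ C, u j ∉ Ioo a b) :
    volume.real C ≤ maxGap u k := by
  have hbelow : BddBelow C := ⟨0, fun z hz => (hC hz).1⟩
  have habove : BddAbove C := ⟨1, fun z hz => (hC hz).2⟩
  have hle := csInf_le_csSup hne hbelow habove
  calc volume.real C ≤ volume.real (Icc (sInf C) (sSup C)) :=
        measureReal_mono (subset_Icc_csInf_csSup hbelow habove) measure_Icc_lt_top.ne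
    _ = sSup C - sInf C := Real.volume_real_Icc_of_le hle
    _ ≤ maxGap u k := by
      refine sub_le_maxGap (le_csInf hne fun z hz => (hC hz).1) hle
        (csSup_le hne fun z hz => (hC hz).2) fun j hj hjk ⟨hlo, hhi⟩ => ?_
      obtain ⟨a, ha, hau⟩ := exists_lt_of_csInf_lt hne hlo
      obtain ⟨b, hb, hub⟩ := exists_lt_of_lt_csSup hne hhi
      exact hgap j hj hjk a ha b hb ⟨hau, hub⟩

theorem abs_volume_real_sub_le_sSup (ν : Measure ℝ) [IsProbabilityMeasure ν]
    {J : Set ℝ} (hJ : J ⊆ Icc 0 1) (hJc : J.OrdConnected) :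
    |volume.real J - ν.real J| ≤ sSup {r : ℝ | ∃ J : Set ℝ, J ⊆ Set.Icc (0:ℝ) 1 ∧
      J.OrdConnected ∧ r = |(volume J).toReal - (ν J).toReal|} := by
  refine le_csSup ⟨1, ?_⟩ ⟨J, hJ, hJc, rfl⟩
  rintro r ⟨J', hJ', -, rfl⟩
  have hvol : volume.real J' ≤ 1 := (measureReal_mono hJ' measure_Icc_lt_top.ne).trans
    (by rw [Real.volume_real_Icc_of_le zero_le_one]; norm_num)
  change |volume.real J' - ν.real J'| ≤ 1
  rw [abs_le]
  constructor <;>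
    linarith [measureReal_le_one (μ := ν) (s := J'), measureReal_nonneg (μ := ν) (s := J'),
      measureReal_nonneg (μ := volume) (s := J')]

theorem discretization_estimate_general
    (u s : ℕ → ℝ)
    (hu : ∀ j, 1 ≤ j → u j ∈ Set.Ioo (0:ℝ) 1)
    (hs : ∀ j, 1 ≤ j → s j = 1 ∨ s j = -1)
    (k : ℕ)
    (ν : Measure ℝ) [IsProbabilityMeasure ν]
    (x : ℝ) (hx : x ∈ Set.Icc (0:ℝ) 1) :
    |(ν {y : ℝ | y ∈ Set.Icc (0:ℝ) 1 ∧ Prec u s y x}).toReal -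
      (ν {y : ℝ | y ∈ Set.Icc (0:ℝ) 1 ∧ phiK u s k y < phiK u s k x}).toReal| ≤
    maxGap u k +
      sSup {r : ℝ | ∃ J : Set ℝ, J ⊆ Set.Icc (0:ℝ) 1 ∧ J.OrdConnected ∧
        r = |(volume J).toReal - (ν J).toReal|} := by
  have hs0 : ∀ j, 1 ≤ j → s j ≠ 0 := fun j hj => by rcases hs j hj with h | h <;> simp [h]
  have hrank : {y | y ∈ Icc 0 1 ∧ phiK u s k y < phiK u s k x} =
      Icc 0 1 ∩ {y | sideWord u s k y < sideWord u s k x} := by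
    ext y
    exact and_congr_right fun hy => phiK_lt_phiK_iff hs0 (fun j hj => (hu j hj).2) hy
  set C := Icc 0 1 ∩ {z | sideWord u s k z = sideWord u s k x}
  have hsplit : |ν.real {y | y ∈ Icc 0 1 ∧ Prec u s y x} -
      ν.real (Icc 0 1 ∩ {y | sideWord u s k y < sideWord u s k x})| ≤ ν.real C :=
    abs_measureReal_sub_le_of_subset_union
      (fun y ⟨hy, hlt⟩ => ⟨hy, ((sideWord_lt_iff hs0).1 hlt).1⟩)
      (fun y ⟨hy, hprec⟩ => (hprec.sideWord_le hs0).lt_or_eq.imp (⟨hy, ·⟩) (⟨hy, ·⟩))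
  have hgap : volume.real C ≤ maxGap u k := by
    refine volume_real_le_maxGap inter_subset_left ⟨x, hx, rfl⟩
      fun j hj hjk a ⟨_, ha⟩ b ⟨_, hb⟩ ⟨hau, hub⟩ => ?_
    have := (sideWord_eq_iff hs0).1 (ha.trans hb.symm) j hj hjk
    exact absurd (this.2 hub.le) (not_le.2 hau)
  have hdisc := abs_volume_real_sub_le_sSup ν inter_subset_left
    (ordConnected_Icc.inter (ordConnected_setOf_sideWord_eq (u := u) (k := k) hs0 x))
  rw [hrank]
  calc _ ≤ ν.real C := hsplit
    _ ≤ volume.real C + |volume.real C - ν.real C| := by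
      linarith [neg_abs_le (volume.real C - ν.real C)]
    _ ≤ _ := add_le_add hgap hdisc

/-- assume the `u_j` pairwise distinct. For every `k ≥ 1`, every probability
measure `ν` on `[0,1]` and every `x ∈ [0,1]`,
`| ν({y : y ≺ x}) − ν({y : φ_k(y) < φ_k(x)}) | ≤ Δ_k + sup_J | Leb(J) − ν(J) |`,
where the supremum runs over all intervals `J ⊆ [0,1]`. -/
theorem discretization_estimate
    (u s : ℕ → ℝ)
    (hu : ∀ j, 1 ≤ j → u j ∈ Set.Ioo (0:ℝ) 1)
    (hs : ∀ j, 1 ≤ j → s j = 1 ∨ s j = -1)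
    (hdist : ∀ j k, 1 ≤ j → 1 ≤ k → u j = u k → j = k)
    (k : ℕ) (hk : 1 ≤ k)
    (ν : Measure ℝ) [IsProbabilityMeasure ν] (hν : ν (Set.Icc (0:ℝ) 1) = 1)
    (x : ℝ) (hx : x ∈ Set.Icc (0:ℝ) 1) :
    |(ν {y : ℝ | y ∈ Set.Icc (0:ℝ) 1 ∧ Prec u s y x}).toReal -
      (ν {y : ℝ | y ∈ Set.Icc (0:ℝ) 1 ∧ phiK u s k y < phiK u s k x}).toReal| ≤
    maxGap u k +
      sSup {r : ℝ | ∃ J : Set ℝ, J ⊆ Set.Icc (0:ℝ) 1 ∧ J.OrdConnected ∧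
        r = |(volume J).toReal - (ν J).toReal|} :=
  discretization_estimate_general u s hu hs k ν x hx
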